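/- arXiv:2011.13454 — 4 statements merged into one kernel-verified Lean document; each statement's English description precedes it below -/
import Mathlib

section
/- Let t' be a proper extension-prefix of a sequence t, say t' = ⟨X₁,…,X_{r−1}, X'_r⟩ with X'_r a nonempty lower segment of X_r. If t has an instance in a q-sequence s at position p = ⟨k₁<⋯<k_m⟩, then p' = ⟨k₁,…,k_r⟩ is a position of an instance of t' in s, k_r is an extension position of t' in s, and u(t,p,s) ≤ u(t',p',s) + u_rest(t',k_r,s). -/
open scoped Classical

namespace TKUS

variable {I : Type*} [Fintype I] [LinearOrder I]

/-- `p` is the (0-based) position list of an instance of the sequence `t`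
in the q-sequence `s`. -/
def IsInstance (s : List (I →₀ ℕ)) (t : List (Finset I)) (p : List ℕ) : Prop :=
  p.length = t.length ∧ p.Chain' (· < ·) ∧
    ∀ v < t.length, p.getD v 0 < s.length ∧
      ∀ i ∈ t.getD v ∅, 0 < s.getD (p.getD v 0) 0 i

/-- `t ⊑ s` : `t` has at least one instance in `s`. -/
def Contains (s : List (I →₀ ℕ)) (t : List (Finset I)) : Prop :=
  ∃ p, IsInstance s t p

/-- `u(t,p,s)` : utility of `t` at position `p` in `s`. -/
def uPos (eu : I → ℝ) (s : List (I →₀ ℕ)) (t : List (Finset I)) (p : List ℕ) : ℝ :=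
  ∑ v ∈ Finset.range t.length, ∑ i ∈ t.getD v ∅,
    (s.getD (p.getD v 0) 0 i : ℝ) * eu i

/-- `u(t,s)` : the maximum utility over all instances of `t` in `s` (`0` if none). -/
noncomputable def uSeq (eu : I → ℝ) (s : List (I →₀ ℕ)) (t : List (Finset I)) : ℝ :=
  sSup {x | ∃ p, IsInstance s t p ∧ x = uPos eu s t p}

/-- the greatest item of the last itemset of `t`, as an element of `WithBot I`. -/
def iLast (t : List (Finset I)) : WithBot I :=
  (t.getLast?.getD ∅).max

/-- `u_rest(t,k,s)` : remaining utility of `t` at extension position `k` in `s`. -/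
def uRest (eu : I → ℝ) (s : List (I →₀ ℕ)) (t : List (Finset I)) (k : ℕ) : ℝ :=
  ∑ j ∈ Finset.range s.length, ∑ i ∈ (s.getD j 0).support,
    if k < j ∨ (j = k ∧ iLast t < (i : WithBot I)) then (s.getD j 0 i : ℝ) * eu i else 0

/-- `k` is an extension position of `t` in `s`. -/
def ExtPos (s : List (I →₀ ℕ)) (t : List (Finset I)) (k : ℕ) : Prop :=
  ∃ p, IsInstance s t p ∧ p.getLast?.getD 0 = k

/-- the pivot : the least extension position of `t` in `s`. -/
noncomputable def pivot (s : List (I →₀ ℕ)) (t : List (Finset I)) : ℕ :=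
  sInf {k | ExtPos s t k}

/-- `u_rest(t,s)` : remaining utility of `t` at the pivot. -/
noncomputable def uRestSeq (eu : I → ℝ) (s : List (I →₀ ℕ)) (t : List (Finset I)) : ℝ :=
  uRest eu s t (pivot s t)

/-- `PEU(t,p,s)`. -/
noncomputable def PEUpos (eu : I → ℝ) (s : List (I →₀ ℕ)) (t : List (Finset I))
    (p : List ℕ) : ℝ :=
  if 0 < uRest eu s t (p.getLast?.getD 0) then
    uPos eu s t p + uRest eu s t (p.getLast?.getD 0)
  else 0

/-- `PEU(t,s)` : maximum of `PEU(t,p,s)` over all instances. -/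
noncomputable def PEUseq (eu : I → ℝ) (s : List (I →₀ ℕ)) (t : List (Finset I)) : ℝ :=
  sSup {x | ∃ p, IsInstance s t p ∧ x = PEUpos eu s t p}

/-- `t'` is an extension-prefix of `t` : `t' = ⟨X₁,…,X_{r−1}, X'_r⟩` where
`X'_r` is a nonempty lower segment of `X_r`. -/
def ExtPrefix (t' t : List (Finset I)) : Prop :=
  t' ≠ [] ∧ t'.length ≤ t.length ∧
    (∀ v, v + 1 < t'.length → t'.getD v ∅ = t.getD v ∅) ∧
    (t'.getD (t'.length - 1) ∅).Nonempty ∧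
    t'.getD (t'.length - 1) ∅ ⊆ t.getD (t'.length - 1) ∅ ∧
    ∀ a ∈ t.getD (t'.length - 1) ∅ \ t'.getD (t'.length - 1) ∅,
      ∀ b ∈ t'.getD (t'.length - 1) ∅, b < a

/-- `t'` is a proper extension-prefix of `t`. -/
def ProperExtPrefix (t' t : List (Finset I)) : Prop :=
  ExtPrefix t' t ∧ t' ≠ t

/-- the length (total number of item occurrences) of a sequence. -/
def seqLen (t : List (Finset I)) : ℕ :=
  (t.map Finset.card).sum

/-- remove the greatest item from a finite itemset. -/
def delMax (X : Finset I) : Finset I :=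
  X.filter fun i => (i : WithBot I) ≠ X.max

/-- the parent of a sequence: delete the greatest item of the last itemset
(dropping that itemset entirely if it becomes empty). -/
def parent (t : List (Finset I)) : List (Finset I) :=
  match t.getLast? with
  | none => []
  | some X => if delMax X = ∅ then t.dropLast else t.dropLast ++ [delMax X]

/-- `u(s)` : utility of a whole q-sequence. -/
def uQ (eu : I → ℝ) (s : List (I →₀ ℕ)) : ℝ :=
  ∑ j ∈ Finset.range s.length, ∑ i ∈ (s.getD j 0).support,
    (s.getD j 0 i : ℝ) * eu i

/-- `u(t)` : utility of `t` in a database `D`. -/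
noncomputable def uDB (eu : I → ℝ) (D : Multiset (List (I →₀ ℕ)))
    (t : List (Finset I)) : ℝ :=
  (D.map fun s => if Contains s t then uSeq eu s t else 0).sum

/-- `PEU(t)` over a database. -/
noncomputable def PEUDB (eu : I → ℝ) (D : Multiset (List (I →₀ ℕ)))
    (t : List (Finset I)) : ℝ :=
  (D.map fun s => if Contains s t then PEUseq eu s t else 0).sum

/-- `RSU(t,s)`. -/
noncomputable def RSUseq (eu : I → ℝ) (s : List (I →₀ ℕ)) (t : List (Finset I)) : ℝ :=
  if Contains s t then PEUseq eu s (parent t) else 0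

/-- `RSU(t)` over a database. -/
noncomputable def RSUDB (eu : I → ℝ) (D : Multiset (List (I →₀ ℕ)))
    (t : List (Finset I)) : ℝ :=
  (D.map fun s => RSUseq eu s t).sum

/-- `SWU(t)` over a database. -/
noncomputable def SWUDB (eu : I → ℝ) (D : Multiset (List (I →₀ ℕ)))
    (t : List (Finset I)) : ℝ :=
  (D.map fun s => if Contains s t then uQ eu s else 0).sum

/-- `SEU(t)` over a database. -/
noncomputable def SEUDB (eu : I → ℝ) (D : Multiset (List (I →₀ ℕ)))
    (t : List (Finset I)) : ℝ :=
  (D.map fun s => if Contains s t then uSeq eu s t + uRestSeq eu s t else 0).sum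

/-- `t' ⊴ t` : `t'` is a subsequence of `t`. -/
def Subseq (t' t : List (Finset I)) : Prop :=
  ∃ p : List ℕ, p.length = t'.length ∧ p.Chain' (· < ·) ∧
    ∀ v < t'.length, p.getD v 0 < t.length ∧ t'.getD v ∅ ⊆ t.getD (p.getD v 0) ∅

/-- `t` is a top-k HUSP with respect to the candidate set `C`. -/
def IsTopK (eu : I → ℝ) (D : Multiset (List (I →₀ ℕ))) (k : ℕ)
    (C : Finset (List (Finset I))) (t : List (Finset I)) : Prop :=
  t ∈ C ∧ (C.filter fun r => uDB eu D t < uDB eu D r).card < k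

/-- an instance of `t` restricts to an instance of a proper
extension-prefix `t'`, `k_r` is an extension position of `t'`, and the
utility of `t` at `p` is bounded by `u(t',p',s) + u_rest(t',k_r,s)`. -/
theorem instance_restricts_to_extension_prefix
    (eu : I → ℝ) (heu : ∀ i, 0 < eu i)
    (t t' : List (Finset I))
    (ht : ∀ X ∈ t, X.Nonempty) (ht' : ∀ X ∈ t', X.Nonempty)
    (hpre : ProperExtPrefix t' t)
    (s : List (I →₀ ℕ)) (p : List ℕ) (hp : IsInstance s t p) :
    IsInstance s t' (p.take t'.length) ∧
    ExtPos s t' (p.getD (t'.length - 1) 0) ∧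
    uPos eu s t p ≤
      uPos eu s t' (p.take t'.length) +
        uRest eu s t' (p.getD (t'.length - 1) 0) := by
  obtain ⟨⟨hne, hlen, heqv, hXne, hsub, hgt⟩, _⟩ := hpre
  obtain ⟨hplen, hchain, hinst⟩ := hp
  set r := t'.length with hr
  set m := t.length with hm
  have hr1 : 0 < r := List.length_pos_iff.mpr hne
  have hrm : r ≤ m := hlen
  have hr1m : r - 1 < m := lt_of_lt_of_le (Nat.sub_lt hr1 one_pos) hrm
  have htake : ∀ v < r, (p.take r).getD v 0 = p.getD v 0 := by
    intro v hv
    simp [List.getD_eq_getElem?_getD, List.getElem?_take, hv]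
  have hmono : ∀ u v, u < v → v < m → p.getD u 0 < p.getD v 0 := by
    intro u v huv hv
    have hv' : v < p.length := by rw [hplen]; exact hv
    rw [List.getD_eq_getElem _ _ (huv.trans hv'), List.getD_eq_getElem _ _ hv']
    exact List.pairwise_iff_getElem.mp (List.isChain_iff_pairwise.mp hchain) u v _ _ huv
  have hsubAll : ∀ v < r, t'.getD v ∅ ⊆ t.getD v ∅ := by
    intro v hv
    rcases lt_or_ge (v + 1) r with h | h
    · rw [heqv v h]
    · have : v = r - 1 := by omega
      rw [this]; exact hsub
  -- Part 1
  have part1 : IsInstance s t' (p.take r) := by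
    refine ⟨?_, hchain.sublist (List.take_sublist r p), ?_⟩
    · rw [List.length_take, hplen]; omega
    · intro v hv
      rw [htake v hv]
      obtain ⟨h1, h2⟩ := hinst v (lt_of_lt_of_le hv hrm)
      exact ⟨h1, fun i hi => h2 i (hsubAll v hv hi)⟩
  have htakelen : (p.take r).length = r := by rw [List.length_take, hplen]; omega
  have htakene : p.take r ≠ [] := by
    intro h; rw [h] at htakelen; simp at htakelen; omega
  have hlast : (p.take r).getLast?.getD 0 = p.getD (r - 1) 0 := by
    rw [List.getLast?_eq_getElem?]
    rw [htakelen, ← htake (r - 1) (Nat.sub_lt hr1 one_pos)]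
    simp [List.getD_eq_getElem?_getD]
  refine ⟨part1, ⟨p.take r, part1, hlast⟩, ?_⟩
  -- Part 3 : the utility inequality
  set k := p.getD (r - 1) 0 with hk
  set X : Finset I := t.getD (r - 1) ∅ with hX
  set X' : Finset I := t'.getD (r - 1) ∅ with hX'
  set term : ℕ → I → ℝ := fun j i => (s.getD j 0 i : ℝ) * eu i with hterm
  have hterm_nonneg : ∀ j i, 0 ≤ term j i := fun j i =>
    mul_nonneg (Nat.cast_nonneg _) (heu i).le
  set A : ℕ → ℝ := fun v => ∑ i ∈ t.getD v ∅, term (p.getD v 0) i with hA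
  set B : ℕ → ℝ := fun j => ∑ i ∈ (s.getD j 0).support,
    if k < j ∨ (j = k ∧ iLast t' < (i : WithBot I)) then term j i else 0 with hB
  have hB_nonneg : ∀ j, 0 ≤ B j := by
    intro j
    refine Finset.sum_nonneg fun i _ => ?_
    split
    · exact hterm_nonneg j i
    · exact le_refl 0
  have hiLast : iLast t' = X'.max := by
    rw [iLast, List.getLast?_eq_getElem?, hX']
    congr 1
  -- splitting uPos t p
  have hsplit : uPos eu s t p = (∑ v ∈ Finset.range (r - 1), A v) + A (r - 1)
      + ∑ v ∈ Finset.Ico r m, A v := by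
    have h1 : ∑ v ∈ Finset.range m, A v
        = (∑ v ∈ Finset.range r, A v) + ∑ v ∈ Finset.Ico r m, A v := by
      simp only [Finset.range_eq_Ico]
      exact (Finset.sum_Ico_consecutive A (Nat.zero_le r) hrm).symm
    have h2 : ∑ v ∈ Finset.range r, A v
        = (∑ v ∈ Finset.range (r - 1), A v) + A (r - 1) := by
      conv_lhs => rw [show r = (r - 1) + 1 by omega]
      rw [Finset.sum_range_succ]
    show (∑ v ∈ Finset.range m, A v) = _
    rw [h1, h2]
  have hsplit' : uPos eu s t' (p.take r)
      = (∑ v ∈ Finset.range (r - 1), A v) + ∑ i ∈ X', term k i := by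
    rw [uPos, ← hr]
    have : r = (r - 1) + 1 := by omega
    rw [this, Finset.sum_range_succ, ← this]
    congr 1
    · refine Finset.sum_congr rfl fun v hv => ?_
      rw [Finset.mem_range] at hv
      have hvr : v < r := by omega
      rw [heqv v (by omega), htake v hvr]
    · rw [htake (r - 1) (by omega)]
  have hAr : A (r - 1) = (∑ i ∈ X', term k i) + ∑ i ∈ X \ X', term k i := by
    rw [hA]
    simp only [← hX, ← hk]
    rw [← Finset.sum_sdiff hsub]
    ring
  -- the leftover terms are bounded by uRest
  set T : Finset ℕ := (Finset.Ico r m).image (fun v => p.getD v 0) with hT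
  have hknotT : k ∉ T := by
    rw [hT]
    simp only [Finset.mem_image, Finset.mem_Ico, not_exists]
    rintro v ⟨⟨hv1, hv2⟩, hv3⟩
    rw [hk] at hv3
    have := hmono (r - 1) v (by omega) hv2
    omega
  have hsum_T : ∑ j ∈ T, B j = ∑ v ∈ Finset.Ico r m, B (p.getD v 0) := by
    rw [hT, Finset.sum_image]
    intro u hu v hv huv
    rw [Finset.mem_coe, Finset.mem_Ico] at hu hv
    by_contra h
    rcases lt_or_gt_of_ne h with h' | h'
    · exact absurd huv (ne_of_lt (hmono u v h' hv.2))
    · exact absurd huv.symm (ne_of_lt (hmono v u h' hu.2))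
  have hBk : ∑ i ∈ X \ X', term k i ≤ B k := by
    rw [hB]
    have hXsupp : X \ X' ⊆ (s.getD k 0).support := by
      intro i hi
      have hiX : i ∈ X := (Finset.mem_sdiff.mp hi).1
      have := (hinst (r - 1) hr1m).2 i hiX
      exact Finsupp.mem_support_iff.mpr (by positivity)
    calc ∑ i ∈ X \ X', term k i
        = ∑ i ∈ X \ X', if k < k ∨ (k = k ∧ iLast t' < (i : WithBot I)) then term k i else 0 := by
          refine Finset.sum_congr rfl fun i hi => ?_
          rw [if_pos]
          right
          refine ⟨rfl, ?_⟩
          rw [hiLast, Finset.max_eq_sup_coe]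
          refine Finset.sup_lt_iff (WithBot.bot_lt_coe i) |>.mpr fun b hb => ?_
          exact WithBot.coe_lt_coe.mpr (hgt i hi b hb)
      _ ≤ B k := by
          rw [hB]
          refine Finset.sum_le_sum_of_subset_of_nonneg hXsupp fun i _ _ => ?_
          split
          · exact hterm_nonneg k i
          · exact le_refl 0
  have hBv : ∀ v ∈ Finset.Ico r m, A v ≤ B (p.getD v 0) := by
    intro v hv
    rw [Finset.mem_Ico] at hv
    have hkv : k < p.getD v 0 := hmono (r - 1) v (by omega) hv.2
    have hsupp : t.getD v ∅ ⊆ (s.getD (p.getD v 0) 0).support := by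
      intro i hi
      have := (hinst v hv.2).2 i hi
      exact Finsupp.mem_support_iff.mpr (by positivity)
    rw [hA, hB]
    calc ∑ i ∈ t.getD v ∅, term (p.getD v 0) i
        = ∑ i ∈ t.getD v ∅, if k < p.getD v 0 ∨ (p.getD v 0 = k ∧ iLast t' < (i : WithBot I))
            then term (p.getD v 0) i else 0 := by
          refine Finset.sum_congr rfl fun i _ => ?_
          rw [if_pos (Or.inl hkv)]
      _ ≤ _ := by
          refine Finset.sum_le_sum_of_subset_of_nonneg hsupp fun i _ _ => ?_
          split
          · exact hterm_nonneg _ i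
          · exact le_refl 0
  have hsubrange : insert k T ⊆ Finset.range s.length := by
    intro j hj
    rw [Finset.mem_insert] at hj
    rcases hj with h | h
    · rw [h, Finset.mem_range]
      exact (hinst (r - 1) hr1m).1
    · rw [hT, Finset.mem_image] at h
      obtain ⟨v, hv, rfl⟩ := h
      rw [Finset.mem_Ico] at hv
      rw [Finset.mem_range]
      exact (hinst v hv.2).1
  have hRest : (∑ i ∈ X \ X', term k i) + ∑ v ∈ Finset.Ico r m, A v
      ≤ uRest eu s t' k := by
    have h1 : (∑ i ∈ X \ X', term k i) + ∑ v ∈ Finset.Ico r m, A v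
        ≤ B k + ∑ j ∈ T, B j := by
      rw [hsum_T]
      exact add_le_add hBk (Finset.sum_le_sum hBv)
    have h2 : B k + ∑ j ∈ T, B j = ∑ j ∈ insert k T, B j :=
      (Finset.sum_insert hknotT).symm
    have h3 : ∑ j ∈ insert k T, B j ≤ ∑ j ∈ Finset.range s.length, B j :=
      Finset.sum_le_sum_of_subset_of_nonneg hsubrange fun j _ _ => hB_nonneg j
    have h4 : uRest eu s t' k = ∑ j ∈ Finset.range s.length, B j := rfl
    rw [h4]
    exact h1.trans (h2.le.trans h3)
  rw [hsplit, hsplit', hAr]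
  linarith [hRest]


end TKUS
end

section
/- Let t' be a proper extension-prefix of a sequence t, say t' = ⟨X₁,…,X_{r−1}, X'_r⟩ with X'_r a nonempty lower segment of X_r. If t has an instance in a q-sequence s at position p = ⟨k₁<⋯<k_m⟩, then the remaining utility of t' at the induced extension position k_r is strictly positive: u_rest(t',k_r,s) > 0. -/
set_option maxHeartbeats 1000000
open scoped Classical

namespace TKUS

variable {I : Type*} [Fintype I] [LinearOrder I]

/-- for a proper extension-prefix `t'` of `t` and an instance of `t`
at position `p` in `s`, the remaining utility of `t'` at the induced extension
position `k_r` is strictly positive. -/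
theorem uRest_pos_of_properExtPrefix
    (eu : I → ℝ) (heu : ∀ i, 0 < eu i)
    (t t' : List (Finset I))
    (ht : ∀ X ∈ t, X.Nonempty) (ht' : ∀ X ∈ t', X.Nonempty)
    (hpre : ProperExtPrefix t' t)
    (s : List (I →₀ ℕ)) (p : List ℕ) (hp : IsInstance s t p) :
    0 < uRest eu s t' (p.getD (t'.length - 1) 0) := by
  obtain ⟨⟨hne, hlen, hprev, hNE, hsub, hlt⟩, hneq⟩ := hpre
  set r := t'.length with hr
  set k := p.getD (r - 1) 0 with hk
  obtain ⟨hplen, hchain, hinst⟩ := hp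
  have hr1 : 1 ≤ r := by
    have : t' ≠ [] := hne
    have := List.length_pos_iff.mpr this
    omega
  have hr1lt : r - 1 < t.length := by omega
  -- key : ∃ j < s.length, ∃ i, condition holds and item has positive quantity
  have key : ∃ j, j < s.length ∧ ∃ i, 0 < s.getD j 0 i ∧
      (k < j ∨ (j = k ∧ iLast t' < (i : WithBot I))) := by
    rcases lt_or_eq_of_le hlen with hcase | hcase
    · -- r < t.length : use position r
      obtain ⟨hjl, hpos⟩ := hinst r hcase
      have htne : (t.getD r ∅).Nonempty := by
        have hmem : t.getD r ∅ ∈ t := by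
          rw [List.getD_eq_getElem _ _ hcase]
          exact List.getElem_mem hcase
        exact ht _ hmem
      obtain ⟨i, hi⟩ := htne
      refine ⟨p.getD r 0, hjl, i, hpos i hi, Or.inl ?_⟩
      -- k = p.getD (r-1) 0 < p.getD r 0 from the chain
      have hrp : r < p.length := by omega
      have := List.isChain_iff_getElem.mp hchain (r - 1) (by omega)
      have heq : r - 1 + 1 = r := by omega
      rw [hk, List.getD_eq_getElem _ _ (show r - 1 < p.length by omega),
        List.getD_eq_getElem _ _ hrp]
      simpa [List.get_eq_getElem, heq] using this
    · -- r = t.length : the last itemset is a strict subset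
      have hexists : ∃ a, a ∈ t.getD (r - 1) ∅ \ t'.getD (r - 1) ∅ := by
        by_contra hno
        push_neg at hno
        have heqlast : t'.getD (r - 1) ∅ = t.getD (r - 1) ∅ := by
          apply Finset.Subset.antisymm hsub
          intro a ha
          by_contra ha'
          exact absurd (Finset.mem_sdiff.mpr ⟨ha, ha'⟩) (hno a)
        apply hneq
        apply List.ext_getElem (by omega)
        intro n h1 h2
        have hgd : t'.getD n ∅ = t.getD n ∅ := by
          rcases Nat.lt_or_ge (n + 1) r with h | h
          · exact hprev n h
          · have : n = r - 1 := by omega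
            rw [this]; exact heqlast
        rwa [List.getD_eq_getElem _ _ h1, List.getD_eq_getElem _ _ h2] at hgd
      obtain ⟨a, ha⟩ := hexists
      rw [Finset.mem_sdiff] at ha
      obtain ⟨hjl, hpos⟩ := hinst (r - 1) hr1lt
      refine ⟨k, hjl, a, hpos a ha.1, Or.inr ⟨rfl, ?_⟩⟩
      -- iLast t' < a
      have hglast : t'.getLast?.getD ∅ = t'.getD (r - 1) ∅ := by
        rw [List.getLast?_eq_getElem?, List.getD_eq_getElem?_getD]
      rw [iLast, hglast]
      have hm : (t'.getD (r - 1) ∅).max = ((t'.getD (r - 1) ∅).max' hNE : WithBot I) :=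
        (Finset.coe_max' hNE).symm
      rw [hm, WithBot.coe_lt_coe]
      exact Finset.max'_lt_iff _ hNE |>.mpr fun b hb => hlt a (Finset.mem_sdiff.mpr ha) b hb
  obtain ⟨j, hjs, i, hipos, hcond⟩ := key
  rw [uRest]
  apply Finset.sum_pos'
  · intro j' _
    apply Finset.sum_nonneg
    intro i' _
    split
    · exact mul_nonneg (by positivity) (heu i').le
    · rfl
  · refine ⟨j, Finset.mem_range.mpr hjs, ?_⟩
    apply Finset.sum_pos'
    · intro i' _
      split
      · exact mul_nonneg (by positivity) (heu i').le
      · rfl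
    · refine ⟨i, Finsupp.mem_support_iff.mpr (by omega), ?_⟩
      rw [if_pos hcond]
      exact mul_pos (by exact_mod_cast hipos) (heu i)

end TKUS
end

section
/- Let t' be a proper extension-prefix of a sequence t, and let s be a q-sequence with t ⊑ s. Then u(t,s) ≤ PEU(t',s). -/
open scoped Classical

namespace TKUS

variable {I : Type*} [Fintype I] [LinearOrder I]

set_option linter.unusedSectionVars false

private lemma getD_take {α} (l : List α) (d : α) {v n : ℕ} (h : v < n) :
    (l.take n).getD v d = l.getD v d := by
  simp [List.getD_eq_getElem?_getD, List.getElem?_take, h]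

private lemma getLast?_getD {α} (l : List α) (d : α) :
    l.getLast?.getD d = l.getD (l.length - 1) d := by
  rw [List.getLast?_eq_getElem?, List.getD_eq_getElem?_getD]

private lemma chain'_getD_lt {l : List ℕ} (h : l.Chain' (· < ·)) {a b : ℕ}
    (hab : a < b) (hb : b < l.length) : l.getD a 0 < l.getD b 0 := by
  replace h := List.isChain_iff_pairwise.mp h
  rw [List.getD_eq_getElem l 0 (lt_trans hab hb), List.getD_eq_getElem l 0 hb]
  exact List.pairwise_iff_getElem.mp h a b _ _ hab

private lemma key_sum_le (eu : I → ℝ) (heu : ∀ i, 0 ≤ eu i) (s : List (I →₀ ℕ))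
    (m : ℕ) (P : ℕ → ℕ)
    (hmono : ∀ a b, a < b → b < m → P a < P b)
    (hlt : ∀ v < m, P v < s.length)
    (Z : ℕ → Finset I)
    (hZ : ∀ v < m, ∀ i ∈ Z v, 0 < s.getD (P v) 0 i)
    (cond : ℕ → I → Prop) [∀ j i, Decidable (cond j i)]
    (hcond : ∀ v < m, ∀ i ∈ Z v, cond (P v) i) :
    ∑ v ∈ Finset.range m, ∑ i ∈ Z v, (s.getD (P v) 0 i : ℝ) * eu i ≤
      ∑ j ∈ Finset.range s.length, ∑ i ∈ (s.getD j 0).support,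
        if cond j i then (s.getD j 0 i : ℝ) * eu i else 0 := by
  classical
  rw [Finset.sum_sigma' (Finset.range m) Z
    (fun v i => (s.getD (P v) 0 i : ℝ) * eu i)]
  rw [Finset.sum_sigma' (Finset.range s.length) (fun j => (s.getD j 0).support)
    (fun j i => if cond j i then (s.getD j 0 i : ℝ) * eu i else 0)]
  set A := (Finset.range m).sigma Z with hA
  set B := (Finset.range s.length).sigma (fun j => (s.getD j 0).support) with hB
  have hinj : ∀ x ∈ A, ∀ y ∈ A,
      (⟨P x.1, x.2⟩ : Σ _ : ℕ, I) = ⟨P y.1, y.2⟩ → x = y := by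
    intro x hx y hy hxy
    simp only [hA, Finset.mem_sigma, Finset.mem_range] at hx hy
    obtain ⟨h1, h2⟩ := Sigma.mk.inj_iff.mp hxy
    have h2' : x.2 = y.2 := eq_of_heq h2
    have h1' : x.1 = y.1 := by
      by_contra hne
      rcases lt_or_gt_of_ne hne with h | h
      · exact absurd h1 (hmono _ _ h hy.1).ne
      · exact absurd h1.symm (hmono _ _ h hx.1).ne
    exact Sigma.ext h1' h2
  have himg : ∀ y ∈ A.image (fun x : Σ _ : ℕ, I => (⟨P x.1, x.2⟩ : Σ _ : ℕ, I)),
      y ∈ B ∧ cond y.1 y.2 := by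
    intro y hy
    obtain ⟨x, hx, rfl⟩ := Finset.mem_image.mp hy
    simp only [hA, Finset.mem_sigma, Finset.mem_range] at hx
    refine ⟨?_, hcond _ hx.1 _ hx.2⟩
    simp only [hB, Finset.mem_sigma, Finset.mem_range]
    exact ⟨hlt _ hx.1, Finsupp.mem_support_iff.mpr (hZ _ hx.1 _ hx.2).ne'⟩
  calc ∑ x ∈ A, (s.getD (P x.1) 0 x.2 : ℝ) * eu x.2
      = ∑ y ∈ A.image (fun x : Σ _ : ℕ, I => (⟨P x.1, x.2⟩ : Σ _ : ℕ, I)),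
          (s.getD y.1 0 y.2 : ℝ) * eu y.2 := (Finset.sum_image (f := fun y : Σ _ : ℕ, I => (s.getD y.1 0 y.2 : ℝ) * eu y.2) hinj).symm
    _ = ∑ y ∈ A.image (fun x : Σ _ : ℕ, I => (⟨P x.1, x.2⟩ : Σ _ : ℕ, I)),
          (if cond y.1 y.2 then (s.getD y.1 0 y.2 : ℝ) * eu y.2 else 0) := by
        refine Finset.sum_congr rfl fun y hy => ?_
        rw [if_pos (himg y hy).2]
    _ ≤ ∑ y ∈ B, (if cond y.1 y.2 then (s.getD y.1 0 y.2 : ℝ) * eu y.2 else 0) := by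
        refine Finset.sum_le_sum_of_subset_of_nonneg (fun y hy => (himg y hy).1) ?_
        intro y _ _
        split
        · exact mul_nonneg (Nat.cast_nonneg _) (heu _)
        · exact le_refl 0


private lemma uQ_nonneg (eu : I → ℝ) (heu : ∀ i, 0 ≤ eu i) (s : List (I →₀ ℕ)) :
    0 ≤ uQ eu s := by
  refine Finset.sum_nonneg fun j _ => Finset.sum_nonneg fun i _ => ?_
  exact mul_nonneg (Nat.cast_nonneg _) (heu _)

private lemma uRest_le_uQ (eu : I → ℝ) (heu : ∀ i, 0 ≤ eu i) (s : List (I →₀ ℕ))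
    (t : List (Finset I)) (k : ℕ) : uRest eu s t k ≤ uQ eu s := by
  refine Finset.sum_le_sum fun j _ => Finset.sum_le_sum fun i _ => ?_
  split
  · exact le_refl _
  · exact mul_nonneg (Nat.cast_nonneg _) (heu _)

private lemma uRest_nonneg (eu : I → ℝ) (heu : ∀ i, 0 ≤ eu i) (s : List (I →₀ ℕ))
    (t : List (Finset I)) (k : ℕ) : 0 ≤ uRest eu s t k := by
  refine Finset.sum_nonneg fun j _ => Finset.sum_nonneg fun i _ => ?_
  split
  · exact mul_nonneg (Nat.cast_nonneg _) (heu _)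
  · exact le_refl _

private lemma uPos_le_uQ (eu : I → ℝ) (heu : ∀ i, 0 ≤ eu i) (s : List (I →₀ ℕ))
    (t : List (Finset I)) (p : List ℕ) (hp : IsInstance s t p) :
    uPos eu s t p ≤ uQ eu s := by
  obtain ⟨hlen, hchain, hinst⟩ := hp
  have h := key_sum_le eu heu s t.length (fun v => p.getD v 0)
    (fun a b hab hb => chain'_getD_lt hchain hab (by omega))
    (fun v hv => (hinst v hv).1)
    (fun v => t.getD v ∅)
    (fun v hv i hi => (hinst v hv).2 i hi)
    (fun _ _ => True) (fun _ _ _ _ => trivial)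
  simpa [uPos, uQ] using h

private lemma iLast_eq_getD (t : List (Finset I)) :
    iLast t = (t.getD (t.length - 1) ∅).max := by
  unfold iLast
  rw [getLast?_getD]

private lemma bddAbove_PEU (eu : I → ℝ) (heu : ∀ i, 0 ≤ eu i) (s : List (I →₀ ℕ))
    (t : List (Finset I)) :
    BddAbove {x | ∃ p, IsInstance s t p ∧ x = PEUpos eu s t p} := by
  refine ⟨uQ eu s + uQ eu s, ?_⟩
  rintro x ⟨q, hq, rfl⟩
  unfold PEUpos
  split
  · exact add_le_add (uPos_le_uQ eu heu s t q hq) (uRest_le_uQ eu heu s t _)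
  · have := uQ_nonneg eu heu s; linarith

/-- `u(t,s) ≤ PEU(t',s)` for a proper extension-prefix `t'` of `t`. -/
theorem uSeq_le_PEUseq_of_properExtPrefix
    (eu : I → ℝ) (heu : ∀ i, 0 < eu i)
    (t t' : List (Finset I))
    (ht : ∀ X ∈ t, X.Nonempty) (ht' : ∀ X ∈ t', X.Nonempty)
    (hpre : ProperExtPrefix t' t)
    (s : List (I →₀ ℕ)) (hs : Contains s t) :
    uSeq eu s t ≤ PEUseq eu s t' := by
  classical
  obtain ⟨⟨hne, hlen, hmid, hlastne, hsub, hlow⟩, hneq⟩ := hpre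
  have heu0 : ∀ i, 0 ≤ eu i := fun i => (heu i).le
  have hr1 : 1 ≤ t'.length := List.length_pos_iff.mpr hne
  have hsubv : ∀ v < t'.length, t'.getD v ∅ ⊆ t.getD v ∅ := by
    intro v hv
    rcases Nat.lt_or_ge v (t'.length - 1) with h | h
    · rw [hmid v (by omega)]
    · have hv' : v = t'.length - 1 := by omega
      rw [hv']; exact hsub
  have hmaxlt : ∀ i ∈ t.getD (t'.length - 1) ∅ \ t'.getD (t'.length - 1) ∅,
      iLast t' < (i : WithBot I) := by
    intro i hi
    rw [iLast_eq_getD]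
    have hb := hlow i hi ((t'.getD (t'.length - 1) ∅).max' hlastne)
      (Finset.max'_mem _ hlastne)
    calc (t'.getD (t'.length - 1) ∅).max
        = (((t'.getD (t'.length - 1) ∅).max' hlastne : I) : WithBot I) :=
          (Finset.coe_max' hlastne).symm
      _ < (i : WithBot I) := WithBot.coe_lt_coe.mpr hb
  have main : ∀ p, IsInstance s t p → uPos eu s t p ≤ PEUseq eu s t' := by
    intro p hp
    obtain ⟨hplen, hchain, hinst⟩ := hp
    set p' := p.take t'.length with hp'def
    have hp'len : p'.length = t'.length := by
      rw [hp'def, List.length_take]; omega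
    have hgetp' : ∀ v < t'.length, p'.getD v 0 = p.getD v 0 :=
      fun v hv => getD_take p 0 hv
    have hinst' : IsInstance s t' p' := by
      refine ⟨hp'len, hchain.prefix (List.take_prefix t'.length p), ?_⟩
      intro v hv
      rw [hgetp' v hv]
      have hvm : v < t.length := lt_of_lt_of_le hv hlen
      exact ⟨(hinst v hvm).1, fun i hi => (hinst v hvm).2 i (hsubv v hv hi)⟩
    set Z : ℕ → Finset I := fun v =>
      if v < t'.length then t.getD v ∅ \ t'.getD v ∅ else t.getD v ∅ with hZdef
    have hZlt : ∀ v, v < t'.length → Z v = t.getD v ∅ \ t'.getD v ∅ := by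
      intro v hv; simp only [hZdef]; rw [if_pos hv]
    have hZge : ∀ v, t'.length ≤ v → Z v = t.getD v ∅ := by
      intro v hv; simp only [hZdef]; rw [if_neg (not_lt.mpr hv)]
    have hZsub : ∀ v, Z v ⊆ t.getD v ∅ := by
      intro v
      rcases Nat.lt_or_ge v t'.length with h | h
      · rw [hZlt v h]; exact Finset.sdiff_subset
      · rw [hZge v h]
    have hZpos : ∀ v < t.length, ∀ i ∈ Z v, 0 < s.getD (p.getD v 0) 0 i :=
      fun v hv i hi => (hinst v hv).2 i (hZsub v hi)
    have hsplit : uPos eu s t p = uPos eu s t' p' +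
        ∑ v ∈ Finset.range t.length, ∑ i ∈ Z v,
          (s.getD (p.getD v 0) 0 i : ℝ) * eu i := by
      unfold uPos
      have hrange : ∀ (g : ℕ → ℝ), ∑ v ∈ Finset.range t.length, g v =
          ∑ v ∈ Finset.range t'.length, g v + ∑ v ∈ Finset.Ico t'.length t.length, g v := by
        intro g
        rw [Finset.range_eq_Ico, Finset.range_eq_Ico]
        exact (Finset.sum_Ico_consecutive g (Nat.zero_le t'.length) hlen).symm
      rw [hrange (fun v => ∑ i ∈ t.getD v ∅, (s.getD (p.getD v 0) 0 i : ℝ) * eu i),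
        hrange (fun v => ∑ i ∈ Z v, (s.getD (p.getD v 0) 0 i : ℝ) * eu i)]
      have h1 : ∑ v ∈ Finset.range t'.length,
            (∑ i ∈ t.getD v ∅, (s.getD (p.getD v 0) 0 i : ℝ) * eu i) =
          ∑ v ∈ Finset.range t'.length,
            ((∑ i ∈ t'.getD v ∅, (s.getD (p'.getD v 0) 0 i : ℝ) * eu i) +
             ∑ i ∈ Z v, (s.getD (p.getD v 0) 0 i : ℝ) * eu i) := by
        refine Finset.sum_congr rfl fun v hv => ?_
        rw [Finset.mem_range] at hv
        rw [hZlt v hv, hgetp' v hv]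
        exact ((add_comm _ _).trans (Finset.sum_sdiff (hsubv v hv))).symm
      have h2 : ∑ v ∈ Finset.Ico t'.length t.length,
            (∑ i ∈ t.getD v ∅, (s.getD (p.getD v 0) 0 i : ℝ) * eu i) =
          ∑ v ∈ Finset.Ico t'.length t.length,
            (∑ i ∈ Z v, (s.getD (p.getD v 0) 0 i : ℝ) * eu i) := by
        refine Finset.sum_congr rfl fun v hv => ?_
        rw [hZge v (Finset.mem_Ico.mp hv).1]
      rw [h1, Finset.sum_add_distrib, h2]
      ring
    have hcond : ∀ v < t.length, ∀ i ∈ Z v,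
        (p.getD (t'.length - 1) 0 < p.getD v 0 ∨
          (p.getD v 0 = p.getD (t'.length - 1) 0 ∧ iLast t' < (i : WithBot I))) := by
      intro v hv i hi
      rcases Nat.lt_or_ge v t'.length with h | h
      · rw [hZlt v h] at hi
        rcases Nat.lt_or_ge v (t'.length - 1) with h2 | h2
        · rw [hmid v (by omega), Finset.sdiff_self] at hi
          exact absurd hi (Finset.notMem_empty i)
        · have hv' : v = t'.length - 1 := by omega
          subst hv'
          exact Or.inr ⟨rfl, hmaxlt i hi⟩
      · exact Or.inl (chain'_getD_lt hchain (show t'.length - 1 < v by omega) (by omega))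
    have hRle : (∑ v ∈ Finset.range t.length, ∑ i ∈ Z v,
          (s.getD (p.getD v 0) 0 i : ℝ) * eu i) ≤
        uRest eu s t' (p.getD (t'.length - 1) 0) := by
      unfold uRest
      exact key_sum_le eu heu0 s t.length (fun v => p.getD v 0)
        (fun a b hab hb => chain'_getD_lt hchain hab (by omega))
        (fun v hv => (hinst v hv).1) Z hZpos
        (fun j i => p.getD (t'.length - 1) 0 < j ∨
          (j = p.getD (t'.length - 1) 0 ∧ iLast t' < (i : WithBot I))) hcond
    obtain ⟨j0, i0, hj0, hi0pos, hcnd⟩ : ∃ j0 i0, j0 < s.length ∧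
        0 < s.getD j0 0 i0 ∧ (p.getD (t'.length - 1) 0 < j0 ∨
          (j0 = p.getD (t'.length - 1) 0 ∧ iLast t' < (i0 : WithBot I))) := by
      rcases lt_or_eq_of_le hlen with h | h
      · have htr : (t.getD t'.length ∅).Nonempty := by
          have hmem : t.getD t'.length ∅ ∈ t := by
            rw [List.getD_eq_getElem t ∅ h]; exact List.getElem_mem h
          exact ht _ hmem
        obtain ⟨i0, hi0⟩ := htr
        exact ⟨p.getD t'.length 0, i0, (hinst t'.length h).1,
          (hinst t'.length h).2 i0 hi0,
          Or.inl (chain'_getD_lt hchain (by omega) (by omega))⟩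
      · have hsd : (t.getD (t'.length - 1) ∅ \ t'.getD (t'.length - 1) ∅).Nonempty := by
          rw [Finset.nonempty_iff_ne_empty]
          intro hemp
          apply hneq
          apply List.ext_getElem (by omega)
          intro n h1 h2
          have e1 : t'[n] = t'.getD n ∅ := (List.getD_eq_getElem t' ∅ h1).symm
          have e2 : t[n] = t.getD n ∅ := (List.getD_eq_getElem t ∅ h2).symm
          rw [e1, e2]
          rcases Nat.lt_or_ge n (t'.length - 1) with h3 | h3
          · exact (hmid n (by omega)).symm.symm ▸ (hmid n (by omega))
          · have hn' : n = t'.length - 1 := by omega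
            rw [hn']
            exact Finset.Subset.antisymm hsub
              (Finset.sdiff_eq_empty_iff_subset.mp hemp)
        obtain ⟨i0, hi0⟩ := hsd
        have hi1 := (Finset.mem_sdiff.mp hi0).1
        exact ⟨p.getD (t'.length - 1) 0, i0, (hinst (t'.length - 1) (by omega)).1,
          (hinst (t'.length - 1) (by omega)).2 i0 hi1,
          Or.inr ⟨rfl, hmaxlt i0 hi0⟩⟩
    have hupos : 0 < uRest eu s t' (p.getD (t'.length - 1) 0) := by
      unfold uRest
      refine Finset.sum_pos' (fun j _ => Finset.sum_nonneg fun i _ => ?_)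
        ⟨j0, Finset.mem_range.mpr hj0, ?_⟩
      · split
        · exact mul_nonneg (Nat.cast_nonneg _) (heu0 _)
        · exact le_refl _
      · refine Finset.sum_pos' (fun i _ => ?_)
          ⟨i0, Finsupp.mem_support_iff.mpr hi0pos.ne', ?_⟩
        · split
          · exact mul_nonneg (Nat.cast_nonneg _) (heu0 _)
          · exact le_refl _
        · rw [if_pos hcnd]
          exact mul_pos (by exact_mod_cast hi0pos) (heu i0)
    have hlast' : p'.getLast?.getD 0 = p.getD (t'.length - 1) 0 := by
      rw [getLast?_getD, hp'len, hgetp' (t'.length - 1) (by omega)]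
    have hPEU : PEUpos eu s t' p' =
        uPos eu s t' p' + uRest eu s t' (p.getD (t'.length - 1) 0) := by
      unfold PEUpos
      rw [hlast', if_pos hupos]
    have hle2 : uPos eu s t p ≤ PEUpos eu s t' p' := by
      rw [hPEU, hsplit]
      exact add_le_add (le_refl _) hRle
    refine hle2.trans (le_csSup (bddAbove_PEU eu heu0 s t') ?_)
    exact ⟨p', hinst', rfl⟩
  obtain ⟨p0, hp0⟩ := hs
  refine csSup_le ⟨uPos eu s t p0, p0, hp0, rfl⟩ ?_
  rintro x ⟨p, hp, rfl⟩
  exact main p hp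

end TKUS
end

section
/- Let t' be a sequence with at least two item occurrences, with parent α, and let t be a sequence such that t' is an extension-prefix of t or t' = t. For every q-sequence s with t ⊑ s, one has u(t,s) ≤ RSU(t',s) = PEU(α,s). -/
open scoped Classical

namespace TKUS

variable {I : Type*} [Fintype I] [LinearOrder I]

-- ===== auxiliary lemmas =====

lemma getD_lt_getD_of_chain' {p : List ℕ} (hc : p.Chain' (· < ·)) {a b : ℕ}
    (hab : a < b) (hb : b < p.length) : p.getD a 0 < p.getD b 0 := by
  replace hc := List.isChain_iff_pairwise.mp hc
  rw [List.getD_eq_getElem _ _ (hab.trans hb), List.getD_eq_getElem _ _ hb]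
  exact List.pairwise_iff_getElem.mp hc a b (hab.trans hb) hb hab

lemma getD_take' {p : List ℕ} {r v : ℕ} (hv : v < r) (hr : r ≤ p.length) :
    (p.take r).getD v 0 = p.getD v 0 := by
  have h1 : v < (p.take r).length := by simp [List.length_take]; omega
  rw [List.getD_eq_getElem _ _ h1, List.getD_eq_getElem _ _ (lt_of_lt_of_le hv hr),
    List.getElem_take]

lemma extPrefix_trans {a b c : List (Finset I)} (hab : ExtPrefix a b)
    (hbc : ExtPrefix b c) : ExtPrefix a c := by
  obtain ⟨h1, h2, h3, h4, h5, h6⟩ := hab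
  obtain ⟨g1, g2, g3, g4, g5, g6⟩ := hbc
  have hra : 1 ≤ a.length := List.length_pos_iff.mpr h1
  rcases eq_or_lt_of_le h2 with he | hl
  · rw [← he] at g5 g6
    refine ⟨h1, le_trans h2 g2, ?_, h4, h5.trans g5, ?_⟩
    · intro v hv; rw [h3 v hv, g3 v (by omega)]
    · intro x hx bb hbb
      by_cases hxb : x ∈ b.getD (a.length - 1) ∅
      · exact h6 x (Finset.mem_sdiff.mpr ⟨hxb, (Finset.mem_sdiff.mp hx).2⟩) bb hbb
      · exact g6 x (Finset.mem_sdiff.mpr ⟨(Finset.mem_sdiff.mp hx).1, hxb⟩) bb (h5 hbb)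
  · have hgeq : b.getD (a.length - 1) ∅ = c.getD (a.length - 1) ∅ := g3 _ (by omega)
    refine ⟨h1, h2.trans g2, fun v hv => (h3 v hv).trans (g3 v (by omega)), h4,
      hgeq ▸ h5, ?_⟩
    intro x hx bb hbb
    refine h6 x ?_ bb hbb
    rw [hgeq]; exact hx

lemma delMax_eq_erase {X : Finset I} (hX : X.Nonempty) :
    delMax X = X.erase (X.max' hX) := by
  ext a
  simp only [delMax, Finset.mem_filter, Finset.mem_erase, ← Finset.coe_max' hX,
    Ne, WithBot.coe_eq_coe, and_comm]

lemma seqLen_eq (t : List (Finset I)) :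
    seqLen t = ∑ v ∈ Finset.range t.length, (t.getD v ∅).card := by
  induction t with
  | nil => simp [seqLen]
  | cons X t ih =>
    have : seqLen (X :: t) = X.card + seqLen t := by simp [seqLen]
    rw [this, ih, List.length_cons, Finset.sum_range_succ']
    simp [add_comm]

lemma parent_concat (t'' : List (Finset I)) (X : Finset I) :
    parent (t'' ++ [X]) = if delMax X = ∅ then t'' else t'' ++ [delMax X] := by
  simp [parent]

lemma seqLen_concat (t'' : List (Finset I)) (X : Finset I) :
    seqLen (t'' ++ [X]) = seqLen t'' + X.card := by
  simp [seqLen]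

lemma getD_concat_self (l : List (Finset I)) (X : Finset I) :
    (l ++ [X]).getD l.length ∅ = X := by
  rw [List.getD_eq_getElem _ _ (by simp)]
  simp

lemma extPrefix_parent (t' : List (Finset I)) (ht' : ∀ X ∈ t', X.Nonempty)
    (h2 : 2 ≤ seqLen t') :
    ExtPrefix (parent t') t' ∧ seqLen (parent t') + 1 = seqLen t' := by
  have hne : t' ≠ [] := by
    intro h; rw [h] at h2; simp [seqLen] at h2
  obtain ⟨t'', X, rfl⟩ := (List.eq_nil_or_concat' t').resolve_left hne
  have hX : X.Nonempty := ht' X (by simp)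
  have hcard : (delMax X).card + 1 = X.card := by
    rw [delMax_eq_erase hX, Finset.card_erase_of_mem (X.max'_mem hX)]
    have := Finset.card_pos.mpr hX
    omega
  rw [parent_concat, seqLen_concat]
  by_cases hd : delMax X = ∅
  · rw [if_pos hd]
    have hX1 : X.card = 1 := by rw [hd] at hcard; simp at hcard; omega
    have ht''ne : t'' ≠ [] := by
      intro h
      rw [h, seqLen_concat] at h2
      simp [seqLen] at h2
      omega
    have hL : 1 ≤ t''.length := List.length_pos_iff.mpr ht''ne
    have hgd : ∀ v < t''.length, (t'' ++ [X]).getD v ∅ = t''.getD v ∅ := by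
      intro v hv; exact List.getD_append _ _ _ _ hv
    have hlast : t''.getD (t''.length - 1) ∅ = t''[t''.length - 1]'(by omega) :=
      List.getD_eq_getElem _ _ (by omega)
    refine ⟨⟨ht''ne, by simp, fun v hv => (hgd v (by omega)).symm, ?_, ?_, ?_⟩, by omega⟩
    · rw [hlast]
      exact ht' _ (List.mem_append_left _ (List.getElem_mem _))
    · rw [hgd (t''.length - 1) (by omega)]
    · intro a ha
      rw [hgd (t''.length - 1) (by omega)] at ha
      simp at ha
    -- done case
  · rw [if_neg hd]
    have hLeq : (t'' ++ [delMax X]).length = (t'' ++ [X]).length := by simp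
    have hL1 : (t'' ++ [delMax X]).length - 1 = t''.length := by simp
    have hgd : ∀ v < t''.length,
        (t'' ++ [delMax X]).getD v ∅ = (t'' ++ [X]).getD v ∅ := by
      intro v hv
      rw [List.getD_append _ _ _ _ hv, List.getD_append _ _ _ _ hv]
    refine ⟨⟨by simp, le_of_eq hLeq, ?_, ?_, ?_, ?_⟩, ?_⟩
    · intro v hv
      simp only [List.length_append, List.length_singleton] at hv
      exact hgd v (by omega)
    · rw [hL1, getD_concat_self]
      exact Finset.nonempty_iff_ne_empty.mpr hd
    · rw [hL1, getD_concat_self, getD_concat_self]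
      exact Finset.filter_subset _ _
    · intro a ha b hb
      rw [hL1, getD_concat_self t'' X, getD_concat_self t'' (delMax X)] at ha
      rw [hL1, getD_concat_self t'' (delMax X)] at hb
      rw [delMax_eq_erase hX] at ha hb
      have ha' : a = X.max' hX := by
        rcases Finset.mem_sdiff.mp ha with ⟨ha1, ha2⟩
        by_contra hcon
        exact ha2 (Finset.mem_erase.mpr ⟨hcon, ha1⟩)
      rcases Finset.mem_erase.mp hb with ⟨hb1, hb2⟩
      rw [ha']
      exact lt_of_le_of_ne (Finset.le_max' X b hb2) hb1
    · rw [seqLen_concat]; omega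

lemma seqLen_le_of_extPrefix {a b : List (Finset I)} (h : ExtPrefix a b) :
    seqLen a ≤ seqLen b := by
  obtain ⟨h1, h2, h3, h4, h5, h6⟩ := h
  have hra : 1 ≤ a.length := List.length_pos_iff.mpr h1
  rw [seqLen_eq, seqLen_eq]
  calc ∑ v ∈ Finset.range a.length, (a.getD v ∅).card
      ≤ ∑ v ∈ Finset.range a.length, (b.getD v ∅).card := by
        apply Finset.sum_le_sum
        intro v hv
        rw [Finset.mem_range] at hv
        by_cases hv1 : v + 1 < a.length
        · rw [h3 v hv1]
        · have hv2 : v = a.length - 1 := by omega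
          subst hv2
          exact Finset.card_le_card h5
    _ ≤ ∑ v ∈ Finset.range b.length, (b.getD v ∅).card :=
        Finset.sum_le_sum_of_subset (by simp [Finset.range_subset]; omega)

lemma isInstance_extPrefix {s : List (I →₀ ℕ)} {a t : List (Finset I)} {p : List ℕ}
    (h : ExtPrefix a t) (hp : IsInstance s t p) :
    IsInstance s a (p.take a.length) := by
  obtain ⟨h1, h2, h3, h4, h5, h6⟩ := h
  obtain ⟨hl, hc, hm⟩ := hp
  have hal : a.length ≤ p.length := by omega
  refine ⟨by simp [List.length_take]; omega, hc.take _, ?_⟩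
  intro v hv
  rw [getD_take' hv hal]
  have hvt : v < t.length := lt_of_lt_of_le hv h2
  refine ⟨(hm v hvt).1, ?_⟩
  intro i hi
  apply (hm v hvt).2
  by_cases hv1 : v + 1 < a.length
  · rwa [← h3 v hv1]
  · have hv2 : v = a.length - 1 := by omega
    subst hv2
    exact h5 hi

lemma finite_isInstance (s : List (I →₀ ℕ)) (t : List (Finset I)) :
    {p : List ℕ | IsInstance s t p}.Finite := by
  apply Set.Finite.subset
    (((List.finite_length_eq (Fin s.length) t.length)).image (List.map Fin.val))
  intro p hp
  obtain ⟨hl, _, hm⟩ := hp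
  have hall : ∀ x ∈ p, x < s.length := by
    intro x hx
    obtain ⟨v, hv, hveq⟩ := List.getElem_of_mem hx
    have := (hm v (by omega)).1
    rwa [List.getD_eq_getElem _ _ hv, hveq] at this
  refine ⟨p.attach.map (fun x => (⟨x.1, hall x.1 x.2⟩ : Fin s.length)), by simp [hl], ?_⟩
  rw [List.map_map]
  have : (Fin.val ∘ fun x : {x // x ∈ p} => (⟨x.1, hall x.1 x.2⟩ : Fin s.length)) =
      Subtype.val := rfl
  rw [this, List.attach_map_subtype_val]

lemma uPos_nonneg (eu : I → ℝ) (heu : ∀ i, 0 < eu i) (s : List (I →₀ ℕ))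
    (t : List (Finset I)) (p : List ℕ) : 0 ≤ uPos eu s t p :=
  Finset.sum_nonneg fun _ _ => Finset.sum_nonneg fun i _ =>
    mul_nonneg (Nat.cast_nonneg _) (heu i).le

lemma PEUpos_nonneg (eu : I → ℝ) (heu : ∀ i, 0 < eu i) (s : List (I →₀ ℕ))
    (t : List (Finset I)) (p : List ℕ) : 0 ≤ PEUpos eu s t p := by
  rw [PEUpos]
  split_ifs with h
  · exact add_nonneg (uPos_nonneg eu heu s t p) h.le
  · exact le_refl 0

lemma PEUpos_le_PEUseq (eu : I → ℝ) (s : List (I →₀ ℕ)) (t : List (Finset I))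
    {p : List ℕ} (hp : IsInstance s t p) :
    PEUpos eu s t p ≤ PEUseq eu s t := by
  have hb : BddAbove {x | ∃ p, IsInstance s t p ∧ x = PEUpos eu s t p} := by
    apply Set.Finite.bddAbove
    apply Set.Finite.subset ((finite_isInstance s t).image (fun p => PEUpos eu s t p))
    rintro x ⟨q, hq, rfl⟩
    exact ⟨q, hq, rfl⟩
  exact le_csSup hb ⟨p, hp, rfl⟩

lemma uPos_le_PEUpos (eu : I → ℝ) (heu : ∀ i, 0 < eu i)
    {s : List (I →₀ ℕ)} {t α : List (Finset I)}
    (ht : ∀ X ∈ t, X.Nonempty)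
    (hα : ExtPrefix α t) (hne : α ≠ t)
    {p : List ℕ} (hp : IsInstance s t p) :
    uPos eu s t p ≤ PEUpos eu s α (p.take α.length) := by
  obtain ⟨h1, h2, h3, h4, h5, h6⟩ := hα
  obtain ⟨hl, hc, hm⟩ := hp
  obtain ⟨m, hr⟩ : ∃ m, α.length = m + 1 :=
    ⟨α.length - 1, by have := List.length_pos_iff.mpr h1; omega⟩
  rw [hr, Nat.add_sub_cancel] at h4 h5 h6
  have hmt : m < t.length := by omega
  have hmp : m < p.length := by omega
  set p' := p.take α.length with hp'
  set k := p.getD m 0 with hk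
  have hks : k < s.length := (hm m hmt).1
  have hite_nonneg : ∀ (j : ℕ) (i : I),
      0 ≤ (if k < j ∨ (j = k ∧ iLast α < (i : WithBot I))
        then (s.getD j 0 i : ℝ) * eu i else 0) := by
    intro j i
    split_ifs
    · exact mul_nonneg (Nat.cast_nonneg _) (heu i).le
    · exact le_refl 0
  set G : ℕ → ℝ := fun j => ∑ i ∈ (s.getD j 0).support,
      if k < j ∨ (j = k ∧ iLast α < (i : WithBot I)) then (s.getD j 0 i : ℝ) * eu i else 0
      with hG
  have hGnn : ∀ j, 0 ≤ G j := fun j => Finset.sum_nonneg fun i _ => hite_nonneg j i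
  have hur : uRest eu s α k = ∑ j ∈ Finset.range s.length, G j := rfl
  set F : ℕ → ℝ := fun v => ∑ i ∈ t.getD v ∅,
      (s.getD (p.getD v 0) 0 i : ℝ) * eu i with hF
  have hptake : ∀ v < α.length, p'.getD v 0 = p.getD v 0 :=
    fun v hv => getD_take' hv (by omega)
  have hlen : p'.length = α.length := by
    rw [hp']; simp [List.length_take]; omega
  have hlast : p'.getLast?.getD 0 = k := by
    have h' : p'.length - 1 < p'.length := by omega
    calc p'.getLast?.getD 0 = p'.getD (p'.length - 1) 0 := by
          rw [List.getLast?_eq_getElem?, List.getElem?_eq_getElem h', Option.getD_some,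
            List.getD_eq_getElem _ _ h']
      _ = p'.getD m 0 := by rw [hlen, hr, Nat.add_sub_cancel]
      _ = p.getD m 0 := hptake m (by omega)
  have hiLast : ∀ i ∈ t.getD m ∅ \ α.getD m ∅, iLast α < (i : WithBot I) := by
    intro i hi
    have hgl : α.getLast?.getD ∅ = α.getD m ∅ := by
      rw [List.getLast?_eq_getElem?]
      simp only [hr, Nat.add_sub_cancel]
      rw [List.getElem?_eq_getElem (by omega), Option.getD_some]
      exact (List.getD_eq_getElem α ∅ (by omega : m < α.length)).symm
    rw [iLast, hgl, ← Finset.coe_max' h4, WithBot.coe_lt_coe]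
    exact h6 i hi _ (Finset.max'_mem _ h4)
  have hmono : ∀ v, m < v → v < p.length → k < p.getD v 0 :=
    fun v hv hvl => getD_lt_getD_of_chain' hc hv hvl
  have hsupp : ∀ v, v < t.length → ∀ i ∈ t.getD v ∅,
      i ∈ (s.getD (p.getD v 0) 0).support := by
    intro v hv i hi
    exact Finsupp.mem_support_iff.mpr ((hm v hv).2 i hi).ne'
  -- positivity of uRest
  have hupos : 0 < uRest eu s α k := by
    have hwit : ∃ v i, v < t.length ∧ i ∈ t.getD v ∅ ∧
        (k < p.getD v 0 ∨ (p.getD v 0 = k ∧ iLast α < (i : WithBot I))) := by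
      rcases lt_or_eq_of_le h2 with hlt | heqn
      · have hne' : (t.getD α.length ∅).Nonempty := by
          rw [List.getD_eq_getElem _ _ hlt]
          exact ht _ (List.getElem_mem _)
        obtain ⟨i, hi⟩ := hne'
        exact ⟨α.length, i, hlt, hi, Or.inl (hmono _ (by omega) (by omega))⟩
      · have hdne : (t.getD m ∅ \ α.getD m ∅).Nonempty := by
          rw [Finset.nonempty_iff_ne_empty]
          intro hcon
          apply hne
          have heq' : α.getD m ∅ = t.getD m ∅ :=
            Finset.Subset.antisymm h5 (Finset.sdiff_eq_empty_iff_subset.mp hcon)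
          apply List.ext_getElem (by omega)
          intro v hv1 hv2
          rw [← List.getD_eq_getElem α ∅ hv1, ← List.getD_eq_getElem t ∅ hv2]
          by_cases hvv : v + 1 < α.length
          · exact h3 v hvv
          · have : v = m := by omega
            subst this
            exact heq'
        obtain ⟨i, hi⟩ := hdne
        exact ⟨m, i, hmt, (Finset.mem_sdiff.mp hi).1, Or.inr ⟨rfl, hiLast i hi⟩⟩
    obtain ⟨v, i, hv, hi, hcond⟩ := hwit
    have hjs : p.getD v 0 < s.length := (hm v hv).1
    have hterm : (0 : ℝ) < (s.getD (p.getD v 0) 0 i : ℝ) * eu i := by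
      apply mul_pos _ (heu i)
      exact_mod_cast (hm v hv).2 i hi
    have h1t : (0 : ℝ) < (if k < p.getD v 0 ∨ (p.getD v 0 = k ∧ iLast α < (i : WithBot I))
        then (s.getD (p.getD v 0) 0 i : ℝ) * eu i else 0) := by
      rw [if_pos hcond]; exact hterm
    have h2t : (if k < p.getD v 0 ∨ (p.getD v 0 = k ∧ iLast α < (i : WithBot I))
        then (s.getD (p.getD v 0) 0 i : ℝ) * eu i else 0) ≤ G (p.getD v 0) := by
      simp only [hG]
      exact Finset.single_le_sum
        (f := fun (i : I) => if k < p.getD v 0 ∨ (p.getD v 0 = k ∧ iLast α < (i : WithBot I))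
          then (s.getD (p.getD v 0) 0 i : ℝ) * eu i else 0)
        (fun i _ => hite_nonneg _ i) (hsupp v hv i hi)
    have h3t : G (p.getD v 0) ≤ uRest eu s α k := by
      rw [hur]
      exact Finset.single_le_sum (fun j _ => hGnn j) (Finset.mem_range.mpr hjs)
    linarith
  -- decomposition of uPos t p
  have hL : uPos eu s t p = (∑ v ∈ Finset.range m, F v)
      + (∑ i ∈ α.getD m ∅, (s.getD k 0 i : ℝ) * eu i)
      + ((∑ i ∈ t.getD m ∅ \ α.getD m ∅, (s.getD k 0 i : ℝ) * eu i)
        + ∑ v ∈ Finset.Ico α.length t.length, F v) := by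
    have e0 : uPos eu s t p = ∑ v ∈ Finset.range t.length, F v := rfl
    have e1 : ∑ v ∈ Finset.range t.length, F v =
        ∑ v ∈ Finset.range α.length, F v + ∑ v ∈ Finset.Ico α.length t.length, F v := by
      rw [Finset.range_eq_Ico, Finset.range_eq_Ico]
      exact (Finset.sum_Ico_consecutive F (Nat.zero_le α.length) h2).symm
    have e2 : ∑ v ∈ Finset.range α.length, F v = ∑ v ∈ Finset.range m, F v + F m := by
      rw [hr, Finset.sum_range_succ]
    have e3 : F m = (∑ i ∈ t.getD m ∅ \ α.getD m ∅, (s.getD k 0 i : ℝ) * eu i)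
        + ∑ i ∈ α.getD m ∅, (s.getD k 0 i : ℝ) * eu i := by
      show (∑ i ∈ t.getD m ∅, (s.getD k 0 i : ℝ) * eu i) = _
      rw [← Finset.sum_sdiff h5]
    rw [e0, e1, e2, e3]
    ring
  have hR : uPos eu s α p' = (∑ v ∈ Finset.range m, F v)
      + ∑ i ∈ α.getD m ∅, (s.getD k 0 i : ℝ) * eu i := by
    rw [uPos, hr, Finset.sum_range_succ]
    congr 1
    · apply Finset.sum_congr rfl
      intro v hv
      rw [Finset.mem_range] at hv
      rw [h3 v (by omega), hptake v (by omega)]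
    · rw [hptake m (by omega), ← hk]
  -- piece 1
  have piece1 : ∑ i ∈ t.getD m ∅ \ α.getD m ∅, (s.getD k 0 i : ℝ) * eu i ≤ G k := by
    have hcongr : ∑ i ∈ t.getD m ∅ \ α.getD m ∅, (s.getD k 0 i : ℝ) * eu i =
        ∑ i ∈ t.getD m ∅ \ α.getD m ∅,
          (if k < k ∨ (k = k ∧ iLast α < (i : WithBot I))
            then (s.getD k 0 i : ℝ) * eu i else 0) := by
      apply Finset.sum_congr rfl
      intro i hi
      rw [if_pos (Or.inr ⟨rfl, hiLast i hi⟩)]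
    rw [hcongr]
    simp only [hG]
    apply Finset.sum_le_sum_of_subset_of_nonneg
    · intro i hi
      exact hsupp m hmt i (Finset.mem_sdiff.mp hi).1
    · intro i _ _
      split_ifs
      · exact mul_nonneg (Nat.cast_nonneg _) (heu i).le
      · exact le_refl 0
  -- piece 2
  have piece2 : ∑ v ∈ Finset.Ico α.length t.length, F v ≤
      ∑ j ∈ Finset.Ico (k + 1) s.length, G j := by
    have step1 : ∀ v ∈ Finset.Ico α.length t.length, F v ≤ G (p.getD v 0) := by
      intro v hv
      rw [Finset.mem_Ico] at hv
      have hkv : k < p.getD v 0 := hmono v (by omega) (by omega)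
      have hcongr : F v = ∑ i ∈ t.getD v ∅,
          (if k < p.getD v 0 ∨ (p.getD v 0 = k ∧ iLast α < (i : WithBot I))
            then (s.getD (p.getD v 0) 0 i : ℝ) * eu i else 0) := by
        apply Finset.sum_congr rfl
        intro i _
        rw [if_pos (Or.inl hkv)]
      rw [hcongr]
      simp only [hG]
      apply Finset.sum_le_sum_of_subset_of_nonneg
      · intro i hi
        exact hsupp v hv.2 i hi
      · intro i _ _
        exact hite_nonneg _ i
    calc ∑ v ∈ Finset.Ico α.length t.length, F v
        ≤ ∑ v ∈ Finset.Ico α.length t.length, G (p.getD v 0) := Finset.sum_le_sum step1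
      _ = ∑ j ∈ (Finset.Ico α.length t.length).image (fun v => p.getD v 0), G j := by
          rw [Finset.sum_image]
          intro x hx y hy hxy
          rw [Finset.mem_coe, Finset.mem_Ico] at hx hy
          rcases lt_trichotomy x y with h | h | h
          · exact absurd hxy (ne_of_lt (getD_lt_getD_of_chain' hc h (by omega)))
          · exact h
          · exact absurd hxy.symm (ne_of_lt (getD_lt_getD_of_chain' hc h (by omega)))
      _ ≤ ∑ j ∈ Finset.Ico (k + 1) s.length, G j := by
          apply Finset.sum_le_sum_of_subset_of_nonneg
          · intro j hj
            rw [Finset.mem_image] at hj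
            obtain ⟨v, hv, rfl⟩ := hj
            rw [Finset.mem_Ico] at hv
            rw [Finset.mem_Ico]
            exact ⟨hmono v (by omega) (by omega), (hm v hv.2).1⟩
          · intro j _ _
            exact hGnn j
  have hfin : G k + ∑ j ∈ Finset.Ico (k + 1) s.length, G j ≤ uRest eu s α k := by
    rw [hur, Finset.range_eq_Ico,
      ← Finset.sum_Ico_consecutive G (Nat.zero_le (k + 1)) (by omega : k + 1 ≤ s.length)]
    refine add_le_add ?_ le_rfl
    exact Finset.single_le_sum (fun j _ => hGnn j) (by simp)
  rw [PEUpos, hlast, if_pos hupos, hR, hL]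
  linarith

/-- for a sequence `t'` with at least two item occurrences, parent `α`,
and `t` with `t'` an extension-prefix of `t` or `t' = t`: for every q-sequence `s`
with `t ⊑ s`, `u(t,s) ≤ RSU(t',s) = PEU(α,s)`. -/
theorem uSeq_le_RSUseq
    (eu : I → ℝ) (heu : ∀ i, 0 < eu i)
    (t t' : List (Finset I))
    (ht : ∀ X ∈ t, X.Nonempty) (ht' : ∀ X ∈ t', X.Nonempty)
    (h2 : 2 ≤ seqLen t')
    (hpre : ExtPrefix t' t ∨ t' = t)
    (s : List (I →₀ ℕ)) (hs : Contains s t) :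
    uSeq eu s t ≤ RSUseq eu s t' ∧
    RSUseq eu s t' = PEUseq eu s (parent t') := by
  obtain ⟨hα', hsl⟩ := extPrefix_parent t' ht' h2
  have hαt : ExtPrefix (parent t') t := by
    rcases hpre with h | h
    · exact extPrefix_trans hα' h
    · subst h; exact hα'
  have hαne : parent t' ≠ t := by
    intro h
    have h1' : seqLen (parent t') < seqLen t' := by omega
    have h2' : seqLen t' ≤ seqLen t := by
      rcases hpre with h' | h'
      · exact seqLen_le_of_extPrefix h'
      · rw [h']
    rw [h] at h1'
    omega
  obtain ⟨p0, hp0⟩ := hs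
  have hct' : Contains s t' := by
    rcases hpre with h | h
    · exact ⟨_, isInstance_extPrefix h hp0⟩
    · subst h; exact ⟨p0, hp0⟩
  have hRSU : RSUseq eu s t' = PEUseq eu s (parent t') := by
    rw [RSUseq, if_pos hct']
  refine ⟨?_, hRSU⟩
  rw [hRSU]
  have hnn : 0 ≤ PEUseq eu s (parent t') :=
    le_trans (PEUpos_nonneg eu heu s (parent t') _)
      (PEUpos_le_PEUseq eu s (parent t') (isInstance_extPrefix hαt hp0))
  apply Real.sSup_le _ hnn
  rintro x ⟨q, hq, rfl⟩
  calc uPos eu s t q ≤ PEUpos eu s (parent t') (q.take (parent t').length) :=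
        uPos_le_PEUpos eu heu ht hαt hαne hq
    _ ≤ PEUseq eu s (parent t') :=
        PEUpos_le_PEUseq eu s (parent t') (isInstance_extPrefix hαt hq)

end TKUS
end
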